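/- For every permutation lattice w of order f, the double transpose equals the original word: (w^t)^t = w. -/
import Mathlib

def theta (k : ℤ) : ℤ := if 0 < k then 1 else 0

def hatCount (w : ℕ → ℤ) (i : ℕ) (k : ℤ) : ℤ :=
  (((Finset.Icc 1 i).filter fun j => w j = k).card : ℤ) -
    (((Finset.Icc 1 i).filter fun j => w j = -k).card : ℤ)

lemma hatCount_eq_sum (w : ℕ → ℤ) (i : ℕ) (k : ℤ) :
    hatCount w i k = ∑ j ∈ Finset.Icc 1 i,
      ((if w j = k then (1:ℤ) else 0) - (if w j = -k then 1 else 0)) := by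
  unfold hatCount
  rw [Finset.sum_sub_distrib, Finset.sum_boole, Finset.sum_boole]

lemma hatCount_zero (w : ℕ → ℤ) (k : ℤ) : hatCount w 0 k = 0 := by
  simp [hatCount]

lemma hatCount_succ (w : ℕ → ℤ) (i : ℕ) (k : ℤ) :
    hatCount w (i + 1) k = hatCount w i k
      + (if w (i+1) = k then 1 else 0) - (if w (i+1) = -k then 1 else 0) := by
  rw [hatCount_eq_sum, hatCount_eq_sum, Finset.sum_Icc_succ_top (by omega : 1 ≤ i + 1)]
  ring

lemma hatCount_neg (w : ℕ → ℤ) (i : ℕ) (k : ℤ) :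
    hatCount w i (-k) = -hatCount w i k := by
  unfold hatCount
  rw [neg_neg]
  ring
def IsPermLattice (f : ℕ) (w : ℕ → ℤ) : Prop :=
  (∀ i, 1 ≤ i → i ≤ f → w i ≠ 0) ∧
  ∀ i, 1 ≤ i → i ≤ f → ∀ k : ℤ, 1 ≤ k →
    hatCount w i (k + 1) ≤ hatCount w i k ∧ 0 ≤ hatCount w i k

def transposePL (w : ℕ → ℤ) : ℕ → ℤ := fun i => hatCount w (i - 1) (w i) + theta (w i)

section
variable {f : ℕ} {w : ℕ → ℤ} {i : ℕ}

lemma hc_nonneg (hw : IsPermLattice f w) (hi : i ≤ f) {k : ℤ} (hk : 1 ≤ k) :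
    0 ≤ hatCount w i k := by
  rcases Nat.eq_zero_or_pos i with h | h
  · subst h; simp [hatCount_zero]
  · exact (hw.2 i h hi k hk).2

lemma hc_mono (hw : IsPermLattice f w) (hi : i ≤ f) {k k' : ℤ} (hk : 1 ≤ k) (hkk : k ≤ k') :
    hatCount w i k' ≤ hatCount w i k := by
  rcases Nat.eq_zero_or_pos i with h | h
  · subst h; simp [hatCount_zero]
  · have key : ∀ d : ℕ, hatCount w i (k + d) ≤ hatCount w i k := by
      intro d
      induction d with
      | zero => simp
      | succ d ih =>
        have := (hw.2 i h hi (k + d) (by omega)).1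
        push_cast
        rw [← add_assoc]
        linarith
    have := key (k' - k).toNat
    rwa [Int.toNat_of_nonneg (by omega), add_sub_cancel] at this

lemma row_bound (hw : IsPermLattice f w) (h1 : 1 ≤ i) (hi : i ≤ f) {k : ℤ} (hk : 1 ≤ k)
    (hpos : 1 ≤ hatCount w i k) : k ≤ i := by
  classical
  have hex : ∀ k' : ℤ, ∃ j : ℕ, k' ∈ Finset.Icc (1:ℤ) k → j ∈ Finset.Icc 1 i ∧ w j = k' := by
    intro k'
    by_cases hk' : k' ∈ Finset.Icc (1:ℤ) k
    · simp only [Finset.mem_Icc] at hk'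
      have h1' : 1 ≤ hatCount w i k' := le_trans hpos (hc_mono hw hi hk'.1 hk'.2)
      unfold hatCount at h1'
      have : 0 < ((Finset.Icc 1 i).filter fun j => w j = k').card := by omega
      obtain ⟨j, hj⟩ := Finset.card_pos.mp this
      simp only [Finset.mem_filter] at hj
      exact ⟨j, fun _ => hj⟩
    · exact ⟨0, fun h => absurd h hk'⟩
  choose φ hφ using hex
  have hcard := Finset.card_le_card_of_injOn φ
    (fun a ha => (hφ a ha).1)
    (by
      intro a ha b hb hab
      have h1 := (hφ a ha).2
      have h2 := (hφ b hb).2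
      rw [← h1, ← h2, hab])
  rw [Int.card_Icc] at hcard
  simp only [Nat.card_Icc] at hcard
  omega

end
def conjPL (w : ℕ → ℤ) (f i : ℕ) (c : ℤ) : ℤ :=
  ∑ k ∈ Finset.Icc 1 f, if c ≤ hatCount w i (k : ℤ) then 1 else 0

section
variable {f : ℕ} {w : ℕ → ℤ} {i : ℕ}

lemma conj_zero {c : ℤ} (hc : 1 ≤ c) : conjPL w f 0 c = 0 := by
  unfold conjPL
  apply Finset.sum_eq_zero
  intro k _
  rw [hatCount_zero, if_neg (by omega)]

lemma conj_succ (hw : IsPermLattice f w) (hif : i + 1 ≤ f) {c : ℤ} (hc : 1 ≤ c) :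
    conjPL w f (i + 1) c = conjPL w f i c
      + (if transposePL w (i + 1) = c then 1 else 0)
      - (if transposePL w (i + 1) = -c then 1 else 0) := by
  have hne : w (i + 1) ≠ 0 := hw.1 (i + 1) (by omega) hif
  have htr : transposePL w (i + 1) = hatCount w i (w (i + 1)) + theta (w (i + 1)) := by
    simp [transposePL]
  have hdiff : conjPL w f (i + 1) c - conjPL w f i c
      = ∑ k ∈ Finset.Icc 1 f,
          ((if c ≤ hatCount w (i + 1) (k : ℤ) then (1:ℤ) else 0)
            - (if c ≤ hatCount w i (k : ℤ) then 1 else 0)) := by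
    rw [Finset.sum_sub_distrib]; rfl
  rcases lt_or_gt_of_ne hne with hneg | hpos
  · -- w (i+1) = -k0 with k0 > 0
    set k0 : ℤ := -w (i + 1) with hk0def
    have hk0 : 1 ≤ k0 := by omega
    have hstep : hatCount w (i + 1) k0 = hatCount w i k0 - 1 := by
      rw [hatCount_succ, if_neg (by omega), if_pos (by omega)]; ring
    have hm1 : 1 ≤ hatCount w i k0 := by
      have := hc_nonneg hw hif hk0 (i := i + 1)
      omega
    have hi1 : 1 ≤ i := by
      rcases Nat.eq_zero_or_pos i with h | h
      · exfalso; rw [h, hatCount_zero] at hm1; omega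
      · exact h
    have hk0i : k0 ≤ i := row_bound hw hi1 (by omega) hk0 hm1
    have hmem : k0.toNat ∈ Finset.Icc 1 f := by
      rw [Finset.mem_Icc]; omega
    have htr' : transposePL w (i + 1) = -hatCount w i k0 := by
      rw [htr]
      have : w (i + 1) = -k0 := by omega
      rw [this, hatCount_neg, theta, if_neg (by omega)]; ring
    have hsum : conjPL w f (i + 1) c - conjPL w f i c
        = -(if hatCount w i k0 = c then 1 else 0) := by
      rw [hdiff, Finset.sum_eq_single_of_mem k0.toNat hmem]
      · have hcast : ((k0.toNat : ℤ)) = k0 := Int.toNat_of_nonneg (by omega)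
        rw [hcast, hstep]
        split_ifs <;> omega
      · intro b hb hbne
        rw [Finset.mem_Icc] at hb
        have hbk : (b : ℤ) ≠ k0 := by
          intro h; apply hbne; omega
        have : hatCount w (i + 1) (b : ℤ) = hatCount w i (b : ℤ) := by
          rw [hatCount_succ, if_neg (by omega), if_neg (by omega)]; ring
        rw [this, sub_self]
    rw [htr', if_neg (show ¬(-hatCount w i k0 = c) by omega),
      show (if -hatCount w i k0 = -c then (1:ℤ) else 0)
          = (if hatCount w i k0 = c then 1 else 0) by split_ifs <;> omega]
    linarith [hsum]
  · -- w (i+1) = k0 > 0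
    set k0 : ℤ := w (i + 1) with hk0def
    have hk0 : 1 ≤ k0 := by omega
    have hstep : hatCount w (i + 1) k0 = hatCount w i k0 + 1 := by
      rw [hatCount_succ, if_pos (by omega), if_neg (by omega)]; ring
    have hm0 : 0 ≤ hatCount w i k0 := hc_nonneg hw (by omega) hk0
    have hk0i : k0 ≤ i + 1 := row_bound hw (by omega) hif hk0 (by omega)
    have hmem : k0.toNat ∈ Finset.Icc 1 f := by rw [Finset.mem_Icc]; omega
    have htr' : transposePL w (i + 1) = hatCount w i k0 + 1 := by
      rw [htr, theta, if_pos (by omega)]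
    have hsum : conjPL w f (i + 1) c - conjPL w f i c
        = (if hatCount w i k0 + 1 = c then 1 else 0) := by
      rw [hdiff, Finset.sum_eq_single_of_mem k0.toNat hmem]
      · have hcast : ((k0.toNat : ℤ)) = k0 := Int.toNat_of_nonneg (by omega)
        rw [hcast, hstep]; split_ifs <;> omega
      · intro b hb hbne
        rw [Finset.mem_Icc] at hb
        have hbk : (b : ℤ) ≠ k0 := fun h => hbne (by omega)
        rw [show hatCount w (i + 1) (b : ℤ) = hatCount w i (b : ℤ) by
          rw [hatCount_succ, if_neg (by omega), if_neg (by omega)]; ring, sub_self]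
    rw [htr', if_neg (show ¬(hatCount w i k0 + 1 = -c) by omega)]
    linarith [hsum]

end
section
variable {f : ℕ} {w : ℕ → ℤ} {j : ℕ}

lemma conj_eq (hw : IsPermLattice f w) :
    ∀ i, i ≤ f → ∀ c : ℤ, 1 ≤ c → hatCount (transposePL w) i c = conjPL w f i c := by
  intro i
  induction i with
  | zero => intro _ c hc; rw [hatCount_zero, conj_zero hc]
  | succ i ih =>
    intro hif c hc
    rw [hatCount_succ, conj_succ hw hif hc, ih (by omega) c hc]

lemma conj_eval_pos (hw : IsPermLattice f w) (hif : j + 1 ≤ f) (hpos : 0 < w (j + 1)) :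
    conjPL w f j (hatCount w j (w (j + 1)) + 1) = w (j + 1) - 1 := by
  set k0 : ℤ := w (j + 1) with hk0def
  have hk0 : 1 ≤ k0 := by omega
  have hstep : hatCount w (j + 1) k0 = hatCount w j k0 + 1 := by
    rw [hatCount_succ, if_pos (by omega), if_neg (by omega)]; ring
  have hm0 : 0 ≤ hatCount w j k0 := hc_nonneg hw (by omega) hk0
  have hk0i : k0 ≤ j + 1 := row_bound hw (by omega) hif hk0 (by omega)
  unfold conjPL
  have hptw : ∀ k' ∈ Finset.Icc 1 f,
      (if hatCount w j k0 + 1 ≤ hatCount w j (k' : ℤ) then (1:ℤ) else 0)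
        = (if (k' : ℤ) < k0 then 1 else 0) := by
    intro k' hk'
    rw [Finset.mem_Icc] at hk'
    by_cases h : (k' : ℤ) < k0
    · rw [if_pos h, if_pos]
      have heq : hatCount w j (k' : ℤ) = hatCount w (j + 1) (k' : ℤ) := by
        rw [hatCount_succ, if_neg (by omega), if_neg (by omega)]; ring
      have := hc_mono hw hif (k := (k' : ℤ)) (k' := k0) (by omega) (by omega)
      omega
    · rw [if_neg h, if_neg]
      have := hc_mono hw (show j ≤ f by omega) (k := k0) (k' := (k' : ℤ)) hk0 (by omega)
      omega
  rw [Finset.sum_congr rfl hptw, Finset.sum_boole]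
  have hfilt : (Finset.Icc 1 f).filter (fun k' : ℕ => (k' : ℤ) < k0) = Finset.Icc 1 (k0.toNat - 1) := by
    ext a
    simp only [Finset.mem_filter, Finset.mem_Icc]
    omega
  rw [hfilt, Nat.card_Icc]
  omega

lemma conj_eval_neg (hw : IsPermLattice f w) (hif : j + 1 ≤ f) (hneg : w (j + 1) < 0) :
    conjPL w f j (hatCount w j (-w (j + 1))) = -w (j + 1) := by
  set k0 : ℤ := -w (j + 1) with hk0def
  have hk0 : 1 ≤ k0 := by omega
  have hstep : hatCount w (j + 1) k0 = hatCount w j k0 - 1 := by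
    rw [hatCount_succ, if_neg (by omega), if_pos (by omega)]; ring
  have hm1 : 1 ≤ hatCount w j k0 := by
    have := hc_nonneg hw hif hk0 (i := j + 1)
    omega
  have hj1 : 1 ≤ j := by
    rcases Nat.eq_zero_or_pos j with h | h
    · exfalso; rw [h, hatCount_zero] at hm1; omega
    · exact h
  have hk0i : k0 ≤ j := row_bound hw hj1 (by omega) hk0 hm1
  unfold conjPL
  have hptw : ∀ k' ∈ Finset.Icc 1 f,
      (if hatCount w j k0 ≤ hatCount w j (k' : ℤ) then (1:ℤ) else 0)
        = (if (k' : ℤ) ≤ k0 then 1 else 0) := by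
    intro k' hk'
    rw [Finset.mem_Icc] at hk'
    by_cases h : (k' : ℤ) ≤ k0
    · rw [if_pos h, if_pos]
      exact hc_mono hw (show j ≤ f by omega) (by omega) h
    · rw [if_neg h, if_neg]
      have heq : hatCount w j (k' : ℤ) = hatCount w (j + 1) (k' : ℤ) := by
        rw [hatCount_succ, if_neg (by omega), if_neg (by omega)]; ring
      have := hc_mono hw hif (k := k0) (k' := (k' : ℤ)) hk0 (by omega)
      omega
  rw [Finset.sum_congr rfl hptw, Finset.sum_boole]
  have hfilt : (Finset.Icc 1 f).filter (fun k' : ℕ => (k' : ℤ) ≤ k0) = Finset.Icc 1 k0.toNat := by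
    ext a
    simp only [Finset.mem_filter, Finset.mem_Icc]
    omega
  rw [hfilt, Nat.card_Icc]
  omega

end

/-- For every permutation lattice `w` of order `f`, the double
transpose equals the original word: `(w^t)^t = w` (as words of order `f`, i.e. the
entries at all positions `1 ≤ i ≤ f` agree). -/
theorem transpose_transpose (f : ℕ) (w : ℕ → ℤ) (hw : IsPermLattice f w) :
    ∀ i, 1 ≤ i → i ≤ f → transposePL (transposePL w) i = w i := by
  intro i h1 hf
  obtain ⟨j, rfl⟩ : ∃ j, i = j + 1 := ⟨i - 1, by omega⟩
  have hne : w (j + 1) ≠ 0 := hw.1 (j + 1) h1 hf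
  have htt : transposePL (transposePL w) (j + 1)
      = hatCount (transposePL w) j (transposePL w (j + 1)) + theta (transposePL w (j + 1)) := by
    simp [transposePL]
  have htr : transposePL w (j + 1) = hatCount w j (w (j + 1)) + theta (w (j + 1)) := by
    simp [transposePL]
  rcases lt_or_gt_of_ne hne with hneg | hpos
  · have hm1 : 1 ≤ hatCount w j (-w (j + 1)) := by
      have hstep : hatCount w (j + 1) (-w (j + 1)) = hatCount w j (-w (j + 1)) - 1 := by
        rw [hatCount_succ, if_neg (by omega), if_pos (by omega)]; ring
      have := hc_nonneg hw hf (show (1:ℤ) ≤ -w (j + 1) by omega) (i := j + 1)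
      omega
    have htr' : transposePL w (j + 1) = -hatCount w j (-w (j + 1)) := by
      rw [htr, theta, if_neg (by omega),
        show w (j + 1) = -(-w (j + 1)) by ring, hatCount_neg]
      ring
    rw [htt, htr', theta, if_neg (by omega), hatCount_neg,
      conj_eq hw j (by omega) _ hm1, conj_eval_neg hw hf hneg]
    ring
  · have hm0 : 0 ≤ hatCount w j (w (j + 1)) := hc_nonneg hw (by omega) (by omega)
    have htr' : transposePL w (j + 1) = hatCount w j (w (j + 1)) + 1 := by
      rw [htr, theta, if_pos (by omega)]
    rw [htt, htr', theta, if_pos (by omega),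
      conj_eq hw j (by omega) _ (by omega), conj_eval_pos hw hf hpos]
    ring
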